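/- Let f : ℝ^d → ℝ satisfy the descent estimate f(y) ≤ f(x) + ⟨∇f(x), y−x⟩ + (1/2)(L₀ + L₁‖∇f(x)‖₊) exp(L₁‖y−x‖)‖y−x‖² for all x, y. Let m ∈ ℝ^d, η > 0, and let x⁺ = x + v where v minimizes ⟨m, ·⟩ over {‖v‖ ≤ η}. Then f(x⁺) ≤ f(x) + 2η‖∇f(x) − m‖₊ − η‖∇f(x)‖₊ + (1/2)(L₀ + L₁‖∇f(x)‖₊) exp(L₁η) η². -/

import Mathlib

/-- The dual norm of an arbitrary norm `N` on `ℝ^d`. -/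
noncomputable def dualNorm {d : ℕ} (N : EuclideanSpace ℝ (Fin d) → ℝ)
    (u : EuclideanSpace ℝ (Fin d)) : ℝ :=
  sSup ((fun v => (inner ℝ u v : ℝ)) '' {v | N v ≤ 1})

section aux
variable {d : ℕ} {N : EuclideanSpace ℝ (Fin d) → ℝ}
  (hN_add : ∀ x y, N (x + y) ≤ N x + N y)
  (hN_smul : ∀ (c : ℝ) x, N (c • x) = |c| * N x)
  (hN_pos : ∀ x, x ≠ 0 → 0 < N x)

include hN_smul in
lemma N_zero : N 0 = 0 := by
  have := hN_smul 0 0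
  simpa using this

include hN_add hN_smul in
lemma N_nonneg (x : EuclideanSpace ℝ (Fin d)) : 0 ≤ N x := by
  have h1 : N (-x) = N x := by
    have := hN_smul (-1) x; simpa using this
  have h2 := hN_add x (-x)
  rw [add_neg_cancel, N_zero hN_smul, h1] at h2
  linarith

include hN_add hN_smul hN_pos in
lemma N_lower : ∃ c > 0, ∀ w : EuclideanSpace ℝ (Fin d), c * ‖w‖ ≤ N w := by
  by_cases hd : ∀ w : EuclideanSpace ℝ (Fin d), w = 0
  · exact ⟨1, one_pos, fun w => by rw [hd w]; simp [N_zero hN_smul]⟩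
  push_neg at hd
  -- N is Lipschitz
  have habs : ∀ (w : EuclideanSpace ℝ (Fin d)) i, |w i| ≤ ‖w‖ := by
    intro w i
    have h := abs_real_inner_le_norm (EuclideanSpace.single i (1:ℝ)) w
    rw [EuclideanSpace.inner_single_left] at h
    simpa using h
  have hsum : ∀ (s : Finset (Fin d)) (g : Fin d → EuclideanSpace ℝ (Fin d)),
      N (∑ i ∈ s, g i) ≤ ∑ i ∈ s, N (g i) := by
    intro s g
    induction s using Finset.cons_induction with
    | empty => simp [N_zero hN_smul]
    | cons a s ha ih =>
      rw [Finset.sum_cons, Finset.sum_cons]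
      exact (hN_add _ _).trans (by linarith)
  set C : ℝ := ∑ i, N (EuclideanSpace.single i (1:ℝ)) with hC
  have hub : ∀ w : EuclideanSpace ℝ (Fin d), N w ≤ C * ‖w‖ := by
    intro w
    have hw : w = ∑ i, w i • EuclideanSpace.single i (1:ℝ) := by
      ext j
      rw [WithLp.ofLp_sum, Finset.sum_apply]
      simp [EuclideanSpace.single_apply]
    calc N w ≤ ∑ i, N (w i • EuclideanSpace.single i (1:ℝ)) := by
            conv_lhs => rw [hw]
            exact hsum Finset.univ _
      _ = ∑ i, |w i| * N (EuclideanSpace.single i (1:ℝ)) := by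
            simp [hN_smul]
      _ ≤ ∑ i, ‖w‖ * N (EuclideanSpace.single i (1:ℝ)) := by
            apply Finset.sum_le_sum
            intro i _
            exact mul_le_mul_of_nonneg_right (habs w i) (N_nonneg hN_add hN_smul _)
      _ = C * ‖w‖ := by
            rw [hC, Finset.sum_mul]
            exact Finset.sum_congr rfl (fun i _ => mul_comm _ _)
  have hcont : Continuous N := by
    apply (LipschitzWith.of_dist_le_mul (K := ⟨max C 0, le_max_right _ _⟩)
      (f := N) ?_).continuous
    intro a b
    have h1 : N a - N b ≤ N (a - b) := by
      have := hN_add (a - b) b; simp at this; linarith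
    have h2 : N b - N a ≤ N (a - b) := by
      have := hN_add (b - a) a
      have hnn : N (b - a) = N (a - b) := by
        have := hN_smul (-1) (a - b); simp [neg_sub] at this; rw [this]
      simp [hnn] at this; linarith
    rw [Real.dist_eq, dist_eq_norm]
    have : |N a - N b| ≤ N (a - b) := abs_sub_le_iff.2 ⟨h1, h2⟩
    calc |N a - N b| ≤ N (a - b) := this
      _ ≤ C * ‖a - b‖ := hub _
      _ ≤ max C 0 * ‖a - b‖ :=
          mul_le_mul_of_nonneg_right (le_max_left _ _) (norm_nonneg _)
  -- min on sphere
  obtain ⟨w₀, hw₀⟩ := hd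
  have hsph : (Metric.sphere (0 : EuclideanSpace ℝ (Fin d)) 1).Nonempty := by
    refine ⟨‖w₀‖⁻¹ • w₀, ?_⟩
    simp [norm_smul, norm_ne_zero_iff.2 hw₀]
  have hcomp : IsCompact (Metric.sphere (0 : EuclideanSpace ℝ (Fin d)) 1) :=
    isCompact_sphere _ _
  obtain ⟨z, hz, hzmin⟩ := hcomp.exists_isMinOn hsph hcont.continuousOn
  have hz1 : ‖z‖ = 1 := by simpa using hz
  have hzne : z ≠ 0 := by intro h; rw [h] at hz1; simp at hz1
  refine ⟨N z, hN_pos z hzne, fun w => ?_⟩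
  rcases eq_or_ne w 0 with rfl | hw
  · simp [N_zero hN_smul]
  · have hwn : ‖w‖ ≠ 0 := norm_ne_zero_iff.2 hw
    have hmem : ‖w‖⁻¹ • w ∈ Metric.sphere (0 : EuclideanSpace ℝ (Fin d)) 1 := by
      simp [norm_smul, hwn]
    have hle : N z ≤ N (‖w‖⁻¹ • w) := hzmin hmem
    have h2 : N (‖w‖⁻¹ • w) = ‖w‖⁻¹ * N w := by
      rw [hN_smul]; congr 1; rw [abs_of_nonneg (by positivity)]
    rw [h2] at hle
    have hpos : (0:ℝ) < ‖w‖ := lt_of_le_of_ne (norm_nonneg _) (Ne.symm hwn)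
    calc N z * ‖w‖ ≤ (‖w‖⁻¹ * N w) * ‖w‖ :=
          mul_le_mul_of_nonneg_right hle (norm_nonneg _)
      _ = N w := by field_simp
end aux

section dual
variable {d : ℕ} {N : EuclideanSpace ℝ (Fin d) → ℝ}
  (hN_add : ∀ x y, N (x + y) ≤ N x + N y)
  (hN_smul : ∀ (c : ℝ) x, N (c • x) = |c| * N x)
  (hN_pos : ∀ x, x ≠ 0 → 0 < N x)

include hN_add hN_smul hN_pos

lemma dual_bdd (u : EuclideanSpace ℝ (Fin d)) :
    BddAbove ((fun w => (inner ℝ u w : ℝ)) '' {w | N w ≤ 1}) := by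
  obtain ⟨c, hc, hlb⟩ := N_lower hN_add hN_smul hN_pos
  refine ⟨‖u‖ * c⁻¹, ?_⟩
  rintro r ⟨w, hw, rfl⟩
  have h1 : ‖w‖ ≤ c⁻¹ := by
    rw [← one_div, le_div_iff₀ hc]
    have := hlb w
    have hw1 : N w ≤ 1 := hw
    nlinarith
  calc (inner ℝ u w : ℝ) ≤ ‖u‖ * ‖w‖ := real_inner_le_norm u w
    _ ≤ ‖u‖ * c⁻¹ := mul_le_mul_of_nonneg_left h1 (norm_nonneg _)

lemma dual_nonneg (u : EuclideanSpace ℝ (Fin d)) : 0 ≤ dualNorm N u := by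
  have h0 : (0:ℝ) ∈ (fun w => (inner ℝ u w : ℝ)) '' {w | N w ≤ 1} :=
    ⟨0, by simp [N_zero hN_smul], by simp⟩
  exact le_csSup (dual_bdd hN_add hN_smul hN_pos u) h0

lemma dual_cs (u w : EuclideanSpace ℝ (Fin d)) :
    (inner ℝ u w : ℝ) ≤ dualNorm N u * N w := by
  rcases eq_or_ne w 0 with rfl | hw
  · simp [N_zero hN_smul]
  · have hNw : 0 < N w := hN_pos w hw
    have hmem : (inner ℝ u ((N w)⁻¹ • w) : ℝ) ∈ (fun w => (inner ℝ u w : ℝ)) '' {w | N w ≤ 1} := by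
      refine ⟨(N w)⁻¹ • w, ?_, rfl⟩
      simp only [Set.mem_setOf_eq, hN_smul, abs_of_nonneg (inv_nonneg.2 hNw.le)]
      rw [inv_mul_cancel₀ hNw.ne']
    have hle : (inner ℝ u ((N w)⁻¹ • w) : ℝ) ≤ dualNorm N u :=
      le_csSup (dual_bdd hN_add hN_smul hN_pos u) hmem
    rw [real_inner_smul_right] at hle
    calc (inner ℝ u w : ℝ) = N w * ((N w)⁻¹ * (inner ℝ u w : ℝ)) := by field_simp
      _ ≤ N w * dualNorm N u := mul_le_mul_of_nonneg_left hle hNw.le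
      _ = dualNorm N u * N w := mul_comm _ _

omit hN_add hN_pos in
lemma dual_le {u : EuclideanSpace ℝ (Fin d)} {b : ℝ}
    (hb : ∀ w, N w ≤ 1 → (inner ℝ u w : ℝ) ≤ b) : dualNorm N u ≤ b := by
  apply csSup_le
  · exact ⟨0, 0, by simp [N_zero hN_smul], by simp⟩
  · rintro r ⟨w, hw, rfl⟩; exact hb w hw

lemma dual_triangle (a b : EuclideanSpace ℝ (Fin d)) :
    dualNorm N a ≤ dualNorm N (a - b) + dualNorm N b := by
  apply dual_le hN_smul
  intro w hw
  have h1 : (inner ℝ a w : ℝ) = (inner ℝ (a - b) w : ℝ) + (inner ℝ b w : ℝ) := by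
    rw [← inner_add_left]; norm_num
  rw [h1]
  have h2 := (dual_cs hN_add hN_smul hN_pos (a-b) w).trans
    (mul_le_of_le_one_right (dual_nonneg hN_add hN_smul hN_pos _) hw)
  have h3 := (dual_cs hN_add hN_smul hN_pos b w).trans
    (mul_le_of_le_one_right (dual_nonneg hN_add hN_smul hN_pos _) hw)
  linarith
end dual

/-- One-step descent inequality for the LMO update: if `f` satisfies the generalized
descent estimate, `v` minimizes `⟨m, ·⟩` over the `η`-ball of the norm `N`, and
`x⁺ = x + v`, then
`f(x⁺) ≤ f(x) + 2η‖∇f(x) − m‖₊ − η‖∇f(x)‖₊ + (1/2)(L₀ + L₁‖∇f(x)‖₊) exp(L₁η) η²`. -/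
theorem stmt_9 {d : ℕ} (f : EuclideanSpace ℝ (Fin d) → ℝ)
    (N : EuclideanSpace ℝ (Fin d) → ℝ)
    (hN_add : ∀ x y, N (x + y) ≤ N x + N y)
    (hN_smul : ∀ (c : ℝ) x, N (c • x) = |c| * N x)
    (hN_pos : ∀ x, x ≠ 0 → 0 < N x)
    (L₀ L₁ : ℝ) (hL₀ : 0 ≤ L₀) (hL₁ : 0 ≤ L₁)
    (hdescent : ∀ x y, f y ≤ f x + (inner ℝ (gradient f x) (y - x) : ℝ) +
      (1 / 2) * (L₀ + L₁ * dualNorm N (gradient f x)) * Real.exp (L₁ * N (y - x)) *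
        N (y - x) ^ 2)
    (x m v : EuclideanSpace ℝ (Fin d)) (η : ℝ) (hη : 0 < η) (hv : N v ≤ η)
    (hmin : ∀ w, N w ≤ η → (inner ℝ m v : ℝ) ≤ (inner ℝ m w : ℝ)) :
    f (x + v) ≤ f x + 2 * η * dualNorm N (gradient f x - m) -
      η * dualNorm N (gradient f x) +
      (1 / 2) * (L₀ + L₁ * dualNorm N (gradient f x)) * Real.exp (L₁ * η) * η ^ 2 := by
  set g := gradient f x with hg
  have hd := hdescent x (x + v)
  rw [add_sub_cancel_left] at hd
  have hdualnn := dual_nonneg hN_add hN_smul hN_pos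
  have hNv : 0 ≤ N v := N_nonneg hN_add hN_smul v
  have hmv : η * dualNorm N m ≤ -(inner ℝ m v : ℝ) := by
    have hle : dualNorm N m ≤ -(inner ℝ m v : ℝ) / η := by
      apply dual_le hN_smul
      intro w hw
      have hNw : N ((-η) • w) ≤ η := by
        rw [hN_smul, abs_of_nonpos (neg_nonpos.2 hη.le), neg_neg]
        calc η * N w ≤ η * 1 := mul_le_mul_of_nonneg_left hw hη.le
          _ = η := mul_one η
      have h := hmin _ hNw
      rw [real_inner_smul_right] at h
      rw [le_div_iff₀ hη]
      nlinarith
    rw [le_div_iff₀ hη] at hle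
    nlinarith
  have hgmv : (inner ℝ (g - m) v : ℝ) ≤ η * dualNorm N (g - m) := by
    refine (dual_cs hN_add hN_smul hN_pos (g - m) v).trans ?_
    nlinarith [hdualnn (g - m)]
  have htri := dual_triangle hN_add hN_smul hN_pos g m
  have hgv : (inner ℝ g v : ℝ) ≤ 2 * η * dualNorm N (g - m) - η * dualNorm N g := by
    have hsplit : (inner ℝ g v : ℝ) = (inner ℝ (g - m) v : ℝ) + (inner ℝ m v : ℝ) := by
      rw [← inner_add_left]; norm_num
    nlinarith [mul_le_mul_of_nonneg_left htri hη.le]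
  have hquad : Real.exp (L₁ * N v) * N v ^ 2 ≤ Real.exp (L₁ * η) * η ^ 2 := by
    have he : Real.exp (L₁ * N v) ≤ Real.exp (L₁ * η) :=
      Real.exp_le_exp.2 (mul_le_mul_of_nonneg_left hv hL₁)
    have h2 : N v ^ 2 ≤ η ^ 2 := by nlinarith
    nlinarith [Real.exp_pos (L₁ * N v), sq_nonneg (N v)]
  have hC : 0 ≤ (1 / 2) * (L₀ + L₁ * dualNorm N g) := by nlinarith [hdualnn g]
  have hq2 := mul_le_mul_of_nonneg_left hquad hC
  calc f (x + v) ≤ f x + (inner ℝ g v : ℝ) +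
        (1 / 2) * (L₀ + L₁ * dualNorm N g) * Real.exp (L₁ * N v) * N v ^ 2 := hd
    _ ≤ f x + 2 * η * dualNorm N (g - m) - η * dualNorm N g +
        (1 / 2) * (L₀ + L₁ * dualNorm N g) * Real.exp (L₁ * η) * η ^ 2 := by nlinarith
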